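/- arXiv:2307.13737 — 5 statements merged into one kernel-verified Lean document; each statement's English description precedes it below -/
import Mathlib

section
/- If a measurement assemblage {M_{a|x}}_{a,x} on ℂ^{d_A} is k-simulable with simulators {B_{b|y}}_{b,y} and conditional probability distributions p(y|x), q(a|x,b,y), then the steering equivalent observables {S_{a|x}}_{a,x} form a k-simulable measurement assemblage on ℂ^{d_B}, with the same distributions p and q and with simulators B̃_{b|y} = ρ_B^{-1/2} tr_A[(B_{b|y} ⊗ 𝟙)ρ_AB] ρ_B^{-1/2}, i.e. S_{a|x} = Σ_{y=1}^k p(y|x) Σ_b q(a|x,b,y) B̃_{b|y} for all a,x. -/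
open Matrix BigOperators
open scoped Kronecker ComplexOrder

noncomputable section

/-- A POVM: a finite family of positive semidefinite matrices summing to the identity. -/
def IsPOVM {ι n : Type*} [Fintype ι] [Fintype n] [DecidableEq n]
    (M : ι → Matrix n n ℂ) : Prop :=
  (∀ i, (M i).PosSemidef) ∧ ∑ i, M i = 1

/-- A density matrix: positive semidefinite with trace one. -/
def IsDensity {n : Type*} [Fintype n] [DecidableEq n] (ρ : Matrix n n ℂ) : Prop :=
  ρ.PosSemidef ∧ ρ.trace = 1

/-- Partial trace over the first tensor factor. -/
def trA {dA dB : ℕ} (M : Matrix (Fin dA × Fin dB) (Fin dA × Fin dB) ℂ) :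
    Matrix (Fin dB) (Fin dB) ℂ :=
  Matrix.of fun j j' => ∑ i, M (i, j) (i, j')

-- The inverse of the positive square root of a positive semidefinite matrix
-- (junk value if the matrix is not positive semidefinite).
open Classical in
def invSqrt {n : Type*} [Fintype n] [DecidableEq n] (A : Matrix n n ℂ) : Matrix n n ℂ :=
  (if h : A.PosSemidef then h.1.eigenvectorUnitary.1 * diagonal ((↑) ∘ (√·) ∘ h.1.eigenvalues) *
    (star h.1.eigenvectorUnitary : Matrix n n ℂ) else 0)⁻¹

/-- The steering-equivalent-observable map: `A ↦ ρ_B^{-1/2} tr_A[(A ⊗ 𝟙) ρ_AB] ρ_B^{-1/2}`. -/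
def SEO {dA dB : ℕ} (ρAB : Matrix (Fin dA × Fin dB) (Fin dA × Fin dB) ℂ)
    (A : Matrix (Fin dA) (Fin dA) ℂ) : Matrix (Fin dB) (Fin dB) ℂ :=
  invSqrt (trA ρAB) * trA ((A ⊗ₖ (1 : Matrix (Fin dB) (Fin dB) ℂ)) * ρAB) * invSqrt (trA ρAB)

/-!
The map `A ↦ ρ_B^{-1/2} tr_A[(A ⊗ 𝟙) ρ_AB] ρ_B^{-1/2}` is linear, so it commutes with the
classical post-processing by `p` and `q`; it is unital because `ρ_B^{-1/2} ρ_B ρ_B^{-1/2} = 𝟙`;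
and it is positive because the partial trace over `A` is cyclic in operators acting on `A` alone:
`tr_A[(X ⊗ 𝟙) ρ] = tr_A[(√X ⊗ 𝟙) ρ (√X ⊗ 𝟙)]`, the partial trace of a positive matrix.
Hence it maps POVMs to POVMs.
-/

open scoped MatrixOrder

section InvSqrt

variable {n : Type*} [Fintype n] [DecidableEq n] {A : Matrix n n ℂ}

lemma invSqrt_eq_inv_sqrt (hA : A.PosSemidef) : invSqrt A = (CFC.sqrt A)⁻¹ := by
  rw [invSqrt, dif_pos hA, CFC.sqrt_eq_real_sqrt A hA.nonneg, cfcₙ_eq_cfc, hA.1.cfc_eq]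
  rfl

lemma isHermitian_invSqrt (hA : A.PosSemidef) : (invSqrt A).IsHermitian := by
  rw [invSqrt_eq_inv_sqrt hA]
  exact (CFC.sqrt_nonneg A).posSemidef.isHermitian.inv

lemma invSqrt_mul_self_mul_invSqrt (hA : A.PosSemidef) (hunit : IsUnit A) :
    invSqrt A * A * invSqrt A = 1 := by
  have hdet : IsUnit (CFC.sqrt A).det :=
    (isUnit_iff_isUnit_det _).mp ((CFC.isUnit_sqrt_iff A hA.nonneg).mpr hunit)
  rw [invSqrt_eq_inv_sqrt hA]
  nth_rw 2 [← CFC.sqrt_mul_sqrt_self A hA.nonneg]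
  rw [← Matrix.mul_assoc, nonsing_inv_mul _ hdet, Matrix.one_mul, mul_nonsing_inv _ hdet]

end InvSqrt

section PartialTrace

variable {dA dB : ℕ}

lemma trA_eq_sum_submatrix (N : Matrix (Fin dA × Fin dB) (Fin dA × Fin dB) ℂ) :
    trA N = ∑ i, N.submatrix (Prod.mk i) (Prod.mk i) := by
  ext j j'
  simp [trA, Matrix.sum_apply]

lemma trA_add (N N' : Matrix (Fin dA × Fin dB) (Fin dA × Fin dB) ℂ) :
    trA (N + N') = trA N + trA N' := by
  ext
  simp [trA, Finset.sum_add_distrib]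

lemma trA_smul (c : ℂ) (N : Matrix (Fin dA × Fin dB) (Fin dA × Fin dB) ℂ) :
    trA (c • N) = c • trA N := by
  ext
  simp [trA, Finset.mul_sum]

lemma posSemidef_trA {N : Matrix (Fin dA × Fin dB) (Fin dA × Fin dB) ℂ} (hN : N.PosSemidef) :
    (trA N).PosSemidef := by
  rw [trA_eq_sum_submatrix]
  exact posSemidef_sum _ fun i _ => hN.submatrix _

lemma trA_kronecker_one_mul_comm (X : Matrix (Fin dA) (Fin dA) ℂ)
    (N : Matrix (Fin dA × Fin dB) (Fin dA × Fin dB) ℂ) :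
    trA ((X ⊗ₖ (1 : Matrix (Fin dB) (Fin dB) ℂ)) * N) = trA (N * (X ⊗ₖ 1)) := by
  ext j j'
  simp only [trA, of_apply, mul_apply, kroneckerMap_apply, one_apply, mul_ite, ite_mul, mul_one,
    mul_zero, zero_mul, Fintype.sum_prod_type, Finset.sum_ite_eq, Finset.sum_ite_eq',
    Finset.mem_univ, ↓reduceIte]
  rw [Finset.sum_comm]
  simp_rw [mul_comm]

lemma posSemidef_trA_kronecker_one_mul {X : Matrix (Fin dA) (Fin dA) ℂ}
    {ρ : Matrix (Fin dA × Fin dB) (Fin dA × Fin dB) ℂ} (hX : X.PosSemidef) (hρ : ρ.PosSemidef) :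
    (trA ((X ⊗ₖ (1 : Matrix (Fin dB) (Fin dB) ℂ)) * ρ)).PosSemidef := by
  set S := CFC.sqrt X ⊗ₖ (1 : Matrix (Fin dB) (Fin dB) ℂ)
  have hS : Sᴴ = S := by
    rw [conjTranspose_kronecker, (CFC.sqrt_nonneg X).posSemidef.isHermitian, conjTranspose_one]
  have hSS : S * S = X ⊗ₖ 1 := by
    rw [← mul_kronecker_mul, one_mul, CFC.sqrt_mul_sqrt_self X hX.nonneg]
  have := posSemidef_trA (hρ.mul_mul_conjTranspose_same S)
  rwa [hS, ← trA_kronecker_one_mul_comm, ← Matrix.mul_assoc, hSS] at this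

end PartialTrace

section SteeringEquivalentObservables

variable {dA dB : ℕ} (ρ : Matrix (Fin dA × Fin dB) (Fin dA × Fin dB) ℂ)

def seoLinearMap : Matrix (Fin dA) (Fin dA) ℂ →ₗ[ℂ] Matrix (Fin dB) (Fin dB) ℂ where
  toFun := SEO ρ
  map_add' A A' := by
    simp only [SEO, add_kronecker, Matrix.add_mul, trA_add, Matrix.mul_add]
  map_smul' c A := by
    simp only [SEO, smul_kronecker, Matrix.smul_mul, trA_smul, Matrix.mul_smul, RingHom.id_apply]

@[simp]
lemma seoLinearMap_apply (A : Matrix (Fin dA) (Fin dA) ℂ) : seoLinearMap ρ A = SEO ρ A := rfl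

variable {ρ}

lemma posSemidef_seo (hρ : ρ.PosSemidef) {A : Matrix (Fin dA) (Fin dA) ℂ} (hA : A.PosSemidef) :
    (SEO ρ A).PosSemidef := by
  rw [SEO]
  nth_rw 2 [← (isHermitian_invSqrt (posSemidef_trA hρ)).eq]
  exact (posSemidef_trA_kronecker_one_mul hA hρ).mul_mul_conjTranspose_same _

lemma seo_one (hρ : ρ.PosSemidef) (hinv : IsUnit (trA ρ)) : SEO ρ 1 = 1 := by
  rw [SEO, one_kronecker_one, Matrix.one_mul,
    invSqrt_mul_self_mul_invSqrt (posSemidef_trA hρ) hinv]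

lemma IsPOVM.seo {ι : Type*} [Fintype ι] {B : ι → Matrix (Fin dA) (Fin dA) ℂ} (hB : IsPOVM B)
    (hρ : ρ.PosSemidef) (hinv : IsUnit (trA ρ)) : IsPOVM (fun i => SEO ρ (B i)) := by
  refine ⟨fun i => posSemidef_seo hρ (hB.1 i), ?_⟩
  simp_rw [← seoLinearMap_apply, ← map_sum, hB.2, seoLinearMap_apply, seo_one hρ hinv]

end SteeringEquivalentObservables

theorem seo_of_kSimulable_general {dA dB na nx k nb : ℕ}
    (ρAB : Matrix (Fin dA × Fin dB) (Fin dA × Fin dB) ℂ)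
    (hρAB : IsDensity ρAB)
    (hinv : IsUnit (trA ρAB))
    (M : Fin nx → Fin na → Matrix (Fin dA) (Fin dA) ℂ)
    (B : Fin k → Fin nb → Matrix (Fin dA) (Fin dA) ℂ)
    (p : Fin nx → Fin k → ℝ) (q : Fin nx → Fin k → Fin nb → Fin na → ℝ)
    (hB : ∀ y, IsPOVM (B y))
    (hsim : ∀ x a, M x a = ∑ y, p x y • ∑ b, q x y b a • B y b) :
    (∀ y, IsPOVM (fun b => SEO ρAB (B y b))) ∧
    ∀ x a, SEO ρAB (M x a) = ∑ y, p x y • ∑ b, q x y b a • SEO ρAB (B y b) := by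
  refine ⟨fun y => (hB y).seo hρAB.1 hinv, fun x a => ?_⟩
  simp only [hsim, ← seoLinearMap_apply, map_sum, LinearMap.map_smul_of_tower]

/-- if Alice's assemblage is `k`-simulable with simulators `B` and
distributions `p`, `q`, then Bob's steering equivalent observables form a `k`-simulable
assemblage with the same `p`, `q` and simulators `B̃_{b|y} = SEO ρAB (B_{b|y})`. -/
theorem seo_of_kSimulable {dA dB na nx k nb : ℕ}
    (ρAB : Matrix (Fin dA × Fin dB) (Fin dA × Fin dB) ℂ)
    (hρAB : IsDensity ρAB)
    (hinv : IsUnit (trA ρAB))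
    (M : Fin nx → Fin na → Matrix (Fin dA) (Fin dA) ℂ)
    (B : Fin k → Fin nb → Matrix (Fin dA) (Fin dA) ℂ)
    (p : Fin nx → Fin k → ℝ) (q : Fin nx → Fin k → Fin nb → Fin na → ℝ)
    (hM : ∀ x, IsPOVM (M x))
    (hB : ∀ y, IsPOVM (B y))
    (hp0 : ∀ x y, 0 ≤ p x y) (hp1 : ∀ x, ∑ y, p x y = 1)
    (hq0 : ∀ x y b a, 0 ≤ q x y b a) (hq1 : ∀ x y b, ∑ a, q x y b a = 1)
    (hsim : ∀ x a, M x a = ∑ y, p x y • ∑ b, q x y b a • B y b) :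
    (∀ y, IsPOVM (fun b => SEO ρAB (B y b))) ∧
    ∀ x a, SEO ρAB (M x a) = ∑ y, p x y • ∑ b, q x y b a • SEO ρAB (B y b) :=
  seo_of_kSimulable_general ρAB hρAB hinv M B p q hB hsim
end
end

section
/- Let {M_{a|x}}_{a,x} be a measurement assemblage on ℂ^d and define the symmetrized operators M̃^k_{a|x} = (1/k) Σ_{ℓ=0}^{k-1} 𝟙^{⊗ℓ} ⊗ M_{a|x} ⊗ 𝟙^{⊗(k-ℓ-1)} on (ℂ^d)^{⊗k}. If {M_{a|x}}_{a,x} is k-compatible with a k-copy joint observable of product form, then the assemblage {M̃^k_{a|x}}_{a,x} is jointly measurable with a joint observable each of whose effects is fully separable across the k tensor factors (i.e., each effect is a finite sum of tensor products of k positive semidefinite matrices). -/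
open Matrix BigOperators
open scoped Kronecker ComplexOrder

noncomputable section

/-- The `k`-fold tensor power of a `d × d` matrix, realized on the index type `Fin k → Fin d`. -/
def tpow {d : ℕ} (k : ℕ) (ρ : Matrix (Fin d) (Fin d) ℂ) :
    Matrix (Fin k → Fin d) (Fin k → Fin d) ℂ :=
  Matrix.of fun f g => ∏ y, ρ (f y) (g y)

/-- The tensor product `A 0 ⊗ A 1 ⊗ ⋯ ⊗ A (k-1)` of a `k`-tuple of `d × d` matrices. -/
def prodOp {d k : ℕ} (A : Fin k → Matrix (Fin d) (Fin d) ℂ) :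
    Matrix (Fin k → Fin d) (Fin k → Fin d) ℂ :=
  Matrix.of fun f g => ∏ y, A y (f y) (g y)

/-- `k`-compatibility with a `k`-copy joint observable of product form:
there are `k` POVMs `B y` and a post-processing `r` such that
`tr[ρ M_{a|x}] = ∑_b r(a|x,b) tr[ρ^{⊗k} (B_{b₁|1} ⊗ ⋯ ⊗ B_{b_k|k})]` for all states `ρ`. -/
def KCompatibleProd {d na nx : ℕ} (k : ℕ)
    (M : Fin nx → Fin na → Matrix (Fin d) (Fin d) ℂ) : Prop :=
  ∃ (nb : ℕ) (B : Fin k → Fin nb → Matrix (Fin d) (Fin d) ℂ)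
    (r : Fin nx → (Fin k → Fin nb) → Fin na → ℝ),
    (∀ y, IsPOVM (B y)) ∧
    (∀ x b a, 0 ≤ r x b a) ∧ (∀ x b, ∑ a, r x b a = 1) ∧
    ∀ ρ : Matrix (Fin d) (Fin d) ℂ, IsDensity ρ → ∀ x a,
      (ρ * M x a).trace =
        ∑ b : Fin k → Fin nb, r x b a • (tpow k ρ * prodOp fun y => B y (b y)).trace

/-- The operator `𝟙^{⊗ℓ} ⊗ A ⊗ 𝟙^{⊗(k-ℓ-1)}` acting on `k` tensor factors. -/
def embedAt {d k : ℕ} (ℓ : Fin k) (A : Matrix (Fin d) (Fin d) ℂ) :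
    Matrix (Fin k → Fin d) (Fin k → Fin d) ℂ :=
  prodOp fun y => if y = ℓ then A else 1

/-- The symmetrized operator `M̃^k = (1/k) ∑_{ℓ=0}^{k-1} 𝟙^{⊗ℓ} ⊗ M ⊗ 𝟙^{⊗(k-ℓ-1)}`. -/
def symmetrize {d : ℕ} (k : ℕ) (A : Matrix (Fin d) (Fin d) ℂ) :
    Matrix (Fin k → Fin d) (Fin k → Fin d) ℂ :=
  (k : ℂ)⁻¹ • ∑ ℓ, embedAt ℓ A

/-- Full separability across the `k` tensor factors: a finite sum of tensor products of
`k` positive semidefinite matrices. -/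
def FullySep {d k : ℕ} (X : Matrix (Fin k → Fin d) (Fin k → Fin d) ℂ) : Prop :=
  ∃ (m : ℕ) (A : Fin m → Fin k → Matrix (Fin d) (Fin d) ℂ),
    (∀ i y, (A i y).PosSemidef) ∧ X = ∑ i, prodOp (A i)

/-!
Write `T = ∑_b r(a|x,b) B_b` with the product effects `B_b = B_{b₁|1} ⊗ ⋯ ⊗ B_{b_k|k}`.
For every state `ρ`, both `T` and `M̃ = symmetrize k M` have expectation `tr[ρ M]` in the
state `ρ^{⊗k}`, so by homogeneity `tr[ρ^{⊗k} (M̃ - T)] = 0` for every positive semidefinite `ρ`.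
Polarization (inclusion–exclusion over subsets of the tensor factors), together with the fact
that positive semidefinite matrices span all matrices, shows that the average of `M̃ - T` over
all permutations `σ` of the tensor factors vanishes. As `M̃` is permutation invariant,
`k! M̃ = ∑_{σ,b} r(a|x,b) σ·B_b`: the fully separable effects `σ·B_b / k!`, indexed by `(σ, b)`,
form a joint observable for `M̃` with the same post-processing `r`.
-/

theorem Finset.sum_neg_one_pow_card_compl_of_range_subset {α ι R : Type*} [Fintype α]
    [Fintype ι] [DecidableEq ι] [CommRing R] (h : α → ι) :
    ∑ s : Finset ι, (if ∀ i, h i ∈ s then (-1 : R) ^ sᶜ.card else 0)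
      = if Function.Surjective h then 1 else 0 := by
  rw [← (Equiv.mk (compl : Finset ι → Finset ι) compl compl_compl compl_compl).sum_comp]
  simp only [Equiv.coe_fn_mk, compl_compl, Finset.mem_compl]
  have hfilter : Finset.univ.filter (fun s : Finset ι => ∀ i, h i ∉ s)
      = (Finset.univ.image h)ᶜ.powerset := by
    ext s
    simp only [Finset.mem_filter, Finset.mem_univ, true_and, Finset.mem_powerset,
      Finset.subset_iff, Finset.mem_image, Finset.mem_compl]
    grind
  have := congrArg (Int.cast : ℤ → R)
    (Finset.sum_powerset_neg_one_pow_card (x := (Finset.univ.image h)ᶜ))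
  push_cast at this
  rw [← Finset.sum_filter, hfilter, this]
  simp only [Finset.compl_eq_empty_iff, Finset.eq_univ_iff_forall, Finset.mem_image,
    Finset.mem_univ, true_and]
  rfl

namespace MultilinearMap

section Polarization

variable {ι R M N : Type*} [Fintype ι] [DecidableEq ι] [CommRing R]
  [AddCommGroup M] [Module R M] [AddCommGroup N] [Module R N]

theorem sum_perm_apply_comp (f : MultilinearMap R (fun _ : ι => M) N) (v : ι → M) :
    ∑ σ : Equiv.Perm ι, f (v ∘ σ)
      = ∑ s : Finset ι, (-1 : R) ^ sᶜ.card • f (fun _ => ∑ i ∈ s, v i) := by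
  have hexpand : ∀ s : Finset ι, f (fun _ => ∑ i ∈ s, v i)
      = ∑ h : ι → ι, if ∀ i, h i ∈ s then f (v ∘ h) else 0 := fun s => by
    rw [f.map_sum_finset (fun _ => v) (fun _ => s), ← Finset.sum_filter]
    congr 1
    ext h
    simp [Fintype.mem_piFinset]
  simp_rw [hexpand, Finset.smul_sum, smul_ite, smul_zero, ← ite_zero_smul]
  rw [Finset.sum_comm]
  simp_rw [← Finset.sum_smul, Finset.sum_neg_one_pow_card_compl_of_range_subset, ite_zero_smul,
    one_smul]
  rw [← Finset.sum_filter]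
  refine Finset.sum_bij (fun σ _ => ⇑σ) (fun σ _ => by simpa using σ.surjective)
    (fun _ _ _ _ h => DFunLike.coe_injective h) (fun h hh => ?_) (fun _ _ => rfl)
  exact ⟨Equiv.ofBijective h (Finite.surjective_iff_bijective.mp (by simpa using hh)),
    Finset.mem_univ _, rfl⟩

end Polarization

theorem eq_zero_of_span_eq_top {ι K V N : Type*} [Finite ι] [Field K] [AddCommGroup V]
    [Module K V] [AddCommGroup N] [Module K N] (f : MultilinearMap K (fun _ : ι => V) N) {s : Set V}
    (hs : Submodule.span K s = ⊤) (h : ∀ v : ι → V, (∀ i, v i ∈ s) → f v = 0) : f = 0 :=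
  Module.Basis.ext_multilinear (fun _ => Module.Basis.ofSpan hs.ge) fun w =>
    h _ fun i => Module.Basis.ofSpan_subset hs.ge ⟨w i, rfl⟩

end MultilinearMap

section TensorPower

variable {d k : ℕ}

theorem prodOp_mul (A C : Fin k → Matrix (Fin d) (Fin d) ℂ) :
    prodOp A * prodOp C = prodOp (A * C) := by
  ext f g
  simp only [Matrix.mul_apply, prodOp, Matrix.of_apply, Pi.mul_apply, ← Finset.prod_mul_distrib]
  exact (Fintype.prod_sum fun y j => A y (f y) j * C y j (g y)).symm

theorem trace_prodOp (A : Fin k → Matrix (Fin d) (Fin d) ℂ) :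
    (prodOp A).trace = ∏ y, (A y).trace :=
  (Fintype.prod_sum fun y j => A y j j).symm

theorem conjTranspose_prodOp (A : Fin k → Matrix (Fin d) (Fin d) ℂ) :
    (prodOp A)ᴴ = prodOp fun y => (A y)ᴴ := by
  ext f g
  simp [prodOp, Matrix.conjTranspose_apply, star_prod]

open scoped MatrixOrder in
theorem posSemidef_prodOp {A : Fin k → Matrix (Fin d) (Fin d) ℂ}
    (hA : ∀ y, (A y).PosSemidef) : (prodOp A).PosSemidef := by
  choose C hC using fun y => CStarAlgebra.nonneg_iff_eq_star_mul_self.mp (hA y).nonneg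
  have hAC : prodOp A = (prodOp C)ᴴ * prodOp C := by
    rw [conjTranspose_prodOp, prodOp_mul]
    exact congrArg prodOp (funext hC)
  exact hAC ▸ Matrix.posSemidef_conjTranspose_mul_self _

theorem prodOp_single (f g : Fin k → Fin d) :
    prodOp (fun y => Matrix.single (f y) (g y) (1 : ℂ)) = Matrix.single f g 1 := by
  ext f' g'
  simp only [prodOp, Matrix.of_apply, Matrix.single_apply, Fintype.prod_boole]
  simp [funext_iff, forall_and]

theorem sum_prodOp_eq_one {n : ℕ} {B : Fin k → Fin n → Matrix (Fin d) (Fin d) ℂ}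
    (hB : ∀ y, ∑ j, B y j = 1) : ∑ b : Fin k → Fin n, prodOp (fun y => B y (b y)) = 1 := by
  ext f g
  simp only [Matrix.sum_apply, prodOp, Matrix.of_apply]
  rw [← Fintype.prod_sum fun y j => B y j (f y) (g y)]
  simp only [← Matrix.sum_apply, hB, Matrix.one_apply, Fintype.prod_boole, funext_iff]
  congr

def prodOpMultilinear :
    MultilinearMap ℂ (fun _ : Fin k => Matrix (Fin d) (Fin d) ℂ)
      (Matrix (Fin k → Fin d) (Fin k → Fin d) ℂ) :=
  MultilinearMap.pi fun f => MultilinearMap.pi fun g =>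
    (MultilinearMap.mkPiAlgebra ℂ (Fin k) ℂ).compLinearMap
      fun y => Matrix.entryLinearMap ℂ ℂ (f y) (g y)

theorem prodOpMultilinear_apply (A : Fin k → Matrix (Fin d) (Fin d) ℂ) :
    prodOpMultilinear A = prodOp A := rfl

def permTensor (σ : Equiv.Perm (Fin k)) :
    Matrix (Fin k → Fin d) (Fin k → Fin d) ℂ ≃ₐ[ℂ] Matrix (Fin k → Fin d) (Fin k → Fin d) ℂ :=
  Matrix.reindexAlgEquiv ℂ ℂ (σ.symm.arrowCongr (Equiv.refl (Fin d)))

theorem permTensor_apply (σ : Equiv.Perm (Fin k)) (X : Matrix (Fin k → Fin d) (Fin k → Fin d) ℂ)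
    (f g : Fin k → Fin d) : permTensor σ X f g = X (f ∘ σ.symm) (g ∘ σ.symm) := rfl

theorem permTensor_symm (σ : Equiv.Perm (Fin k)) :
    (permTensor σ).symm = permTensor (d := d) σ⁻¹ := rfl

theorem trace_permTensor (σ : Equiv.Perm (Fin k)) (X : Matrix (Fin k → Fin d) (Fin k → Fin d) ℂ) :
    (permTensor σ X).trace = X.trace := by
  simp only [Matrix.trace, Matrix.diag, permTensor_apply]
  exact Equiv.sum_comp (σ.symm.arrowCongr (Equiv.refl (Fin d))).symm (fun f => X f f)

theorem permTensor_prodOp (σ : Equiv.Perm (Fin k)) (A : Fin k → Matrix (Fin d) (Fin d) ℂ) :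
    permTensor σ (prodOp A) = prodOp (A ∘ σ) := by
  ext f g
  simp only [permTensor_apply, prodOp, Matrix.of_apply, Function.comp_apply]
  exact (Equiv.prod_comp σ _).symm.trans (by simp)

theorem tpow_eq_prodOp (ρ : Matrix (Fin d) (Fin d) ℂ) : tpow k ρ = prodOp fun _ => ρ := rfl

theorem tpow_smul (c : ℂ) (ρ : Matrix (Fin d) (Fin d) ℂ) : tpow k (c • ρ) = c ^ k • tpow k ρ := by
  simpa [tpow_eq_prodOp, ← prodOpMultilinear_apply] using
    prodOpMultilinear.map_smul_univ (fun _ : Fin k => c) fun _ => ρ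

theorem tpow_zero (hk : 0 < k) : tpow k (0 : Matrix (Fin d) (Fin d) ℂ) = 0 :=
  prodOpMultilinear.map_coord_zero (m := fun _ => 0) ⟨0, hk⟩ rfl

theorem permTensor_symmetrize (σ : Equiv.Perm (Fin k)) (A : Matrix (Fin d) (Fin d) ℂ) :
    permTensor σ (symmetrize k A) = symmetrize k A := by
  have hembed : ∀ ℓ, permTensor σ (embedAt ℓ A) = embedAt (σ⁻¹ ℓ) A := fun ℓ => by
    simp only [embedAt, permTensor_prodOp]
    congr 1
    funext y
    simp [Equiv.Perm.inv_def, Equiv.eq_symm_apply]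
  simp only [symmetrize, map_smul, map_sum, hembed]
  congr 1
  exact Equiv.sum_comp (σ⁻¹) fun ℓ => embedAt ℓ A

theorem trace_tpow_mul_symmetrize (hk : 0 < k) {ρ : Matrix (Fin d) (Fin d) ℂ}
    (hρ : ρ.trace = 1) (A : Matrix (Fin d) (Fin d) ℂ) :
    (tpow k ρ * symmetrize k A).trace = (ρ * A).trace := by
  have hembed : ∀ ℓ : Fin k, (tpow k ρ * embedAt ℓ A).trace = (ρ * A).trace := fun ℓ => by
    simp only [tpow_eq_prodOp, embedAt, prodOp_mul, trace_prodOp, Pi.mul_apply, mul_ite,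
      apply_ite Matrix.trace, mul_one, hρ, Finset.prod_ite_eq', Finset.mem_univ, if_true]
  have hk' : (k : ℂ) ≠ 0 := by exact_mod_cast hk.ne'
  simp only [symmetrize, Matrix.mul_smul, Matrix.mul_sum, Matrix.trace_smul, Matrix.trace_sum,
    hembed, Finset.sum_const, Finset.card_univ, Fintype.card_fin, nsmul_eq_mul, smul_eq_mul]
  field_simp

theorem trace_tpow_mul_eq_zero_of_posSemidef (hk : 0 < k)
    {X : Matrix (Fin k → Fin d) (Fin k → Fin d) ℂ}
    (h : ∀ ρ, IsDensity ρ → (tpow k ρ * X).trace = 0) {ρ : Matrix (Fin d) (Fin d) ℂ}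
    (hρ : ρ.PosSemidef) : (tpow k ρ * X).trace = 0 := by
  rcases eq_or_ne ρ 0 with rfl | hρ0
  · simp [tpow_zero hk]
  have ht : ρ.trace ≠ 0 := fun h0 => hρ0 (hρ.trace_eq_zero_iff.mp h0)
  have hdens : IsDensity (ρ.trace⁻¹ • ρ) :=
    ⟨hρ.smul (inv_nonneg.mpr hρ.trace_nonneg), by
      rw [Matrix.trace_smul, smul_eq_mul, inv_mul_cancel₀ ht]⟩
  simpa [tpow_smul, ht] using h _ hdens

theorem trace_permTensor_mul (σ : Equiv.Perm (Fin k))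
    (P X : Matrix (Fin k → Fin d) (Fin k → Fin d) ℂ) :
    (permTensor σ P * X).trace = (P * permTensor σ⁻¹ X).trace := by
  conv_lhs => rw [← (permTensor σ).apply_symm_apply X, ← map_mul, trace_permTensor]
  rw [permTensor_symm]

open scoped MatrixOrder Matrix.Norms.L2Operator in
theorem span_posSemidef_eq_top :
    Submodule.span ℂ {A : Matrix (Fin d) (Fin d) ℂ | A.PosSemidef} = ⊤ := by
  simpa only [Matrix.nonneg_iff_posSemidef] using
    CStarAlgebra.span_nonneg (A := Matrix (Fin d) (Fin d) ℂ)

theorem sum_permTensor_eq_zero_of_trace_tpow_mul {X : Matrix (Fin k → Fin d) (Fin k → Fin d) ℂ}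
    (h : ∀ ρ, ρ.PosSemidef → (tpow k ρ * X).trace = 0) : ∑ σ, permTensor σ X = 0 := by
  let Φ : MultilinearMap ℂ (fun _ : Fin k => Matrix (Fin d) (Fin d) ℂ) ℂ :=
    (Matrix.traceLinearMap _ ℂ ℂ ∘ₗ LinearMap.mulRight ℂ X).compMultilinearMap prodOpMultilinear
  have hΦ : ∀ v, Φ v = (prodOp v * X).trace := fun v => rfl
  have hsym : ∑ σ : Equiv.Perm (Fin k), Φ.domDomCongr σ = 0 := by
    refine MultilinearMap.eq_zero_of_span_eq_top _ span_posSemidef_eq_top fun v hv => ?_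
    rw [_root_.sum_apply]
    show ∑ σ : Equiv.Perm (Fin k), Φ (v ∘ σ) = 0
    rw [Φ.sum_perm_apply_comp]
    refine Finset.sum_eq_zero fun s _ => ?_
    rw [hΦ, ← tpow_eq_prodOp, h _ (Matrix.posSemidef_sum s fun i _ => hv i), smul_zero]
  ext f g
  have hterm : ∀ σ : Equiv.Perm (Fin k),
      Φ.domDomCongr σ (fun y => Matrix.single (g y) (f y) 1) = permTensor σ⁻¹ X f g := fun σ => by
    rw [MultilinearMap.domDomCongr_apply, hΦ]
    rw [show (fun i => Matrix.single (g (σ i)) (f (σ i)) (1 : ℂ))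
        = (fun y => Matrix.single (g y) (f y) 1) ∘ σ from rfl, ← permTensor_prodOp,
      trace_permTensor_mul, prodOp_single, Matrix.trace_single_mul, one_smul]
  have := congr($hsym fun y => Matrix.single (g y) (f y) 1)
  rw [_root_.sum_apply, _root_.zero_apply] at this
  rw [Matrix.sum_apply, Matrix.zero_apply, ← Equiv.sum_comp (Equiv.inv _)]
  simpa only [hterm, Equiv.inv_apply] using this

open Nat in
theorem factorial_smul_symmetrize_eq_sum_permTensor (hk : 0 < k) {A : Matrix (Fin d) (Fin d) ℂ}
    {T : Matrix (Fin k → Fin d) (Fin k → Fin d) ℂ}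
    (h : ∀ ρ, IsDensity ρ → (ρ * A).trace = (tpow k ρ * T).trace) :
    (k ! : ℂ) • symmetrize k A = ∑ σ, permTensor σ T := by
  have hzero := sum_permTensor_eq_zero_of_trace_tpow_mul (X := symmetrize k A - T) fun ρ hρ =>
    trace_tpow_mul_eq_zero_of_posSemidef hk (fun ρ hρ => by
      rw [Matrix.mul_sub, Matrix.trace_sub, trace_tpow_mul_symmetrize hk hρ.2, h ρ hρ, sub_self]) hρ
  simp only [map_sub, Finset.sum_sub_distrib, permTensor_symmetrize, sub_eq_zero, Finset.sum_const,
    Finset.card_univ, Fintype.card_perm, Fintype.card_fin] at hzero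
  rw [← hzero, Nat.cast_smul_eq_nsmul]

theorem FullySep.posSemidef {X : Matrix (Fin k → Fin d) (Fin k → Fin d) ℂ} (hX : FullySep X) :
    X.PosSemidef := by
  obtain ⟨m, A, hA, rfl⟩ := hX
  exact Matrix.posSemidef_sum _ fun i _ => posSemidef_prodOp (hA i)

theorem fullySep_smul_prodOp (hk : 0 < k) {A : Fin k → Matrix (Fin d) (Fin d) ℂ}
    (hA : ∀ y, (A y).PosSemidef) {c : ℂ} (hc : 0 ≤ c) : FullySep (c • prodOp A) := by
  classical
  let y₀ : Fin k := ⟨0, hk⟩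
  refine ⟨1, fun _ => Function.update A y₀ (c • A y₀), fun _ y => ?_, ?_⟩
  · rcases eq_or_ne y y₀ with rfl | hy
    · simpa using (hA y₀).smul hc
    · simpa [hy] using hA y
  · have := prodOpMultilinear.map_update_smul A y₀ c (A y₀)
    rw [Function.update_eq_self] at this
    rw [Fin.sum_univ_one]
    exact this.symm

section PermProdOp

open Nat

variable {nb : ℕ} (B : Fin k → Fin nb → Matrix (Fin d) (Fin d) ℂ)

def permProdOp (σb : Equiv.Perm (Fin k) × (Fin k → Fin nb)) :
    Matrix (Fin k → Fin d) (Fin k → Fin d) ℂ :=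
  (k ! : ℂ)⁻¹ • permTensor σb.1 (prodOp fun y => B y (σb.2 y))

variable {B}

theorem fullySep_permProdOp (hk : 0 < k) (hB : ∀ y j, (B y j).PosSemidef)
    (σb : Equiv.Perm (Fin k) × (Fin k → Fin nb)) : FullySep (permProdOp B σb) := by
  rw [permProdOp, permTensor_prodOp]
  exact fullySep_smul_prodOp hk (fun y => hB _ _) (inv_nonneg.mpr (Nat.cast_nonneg _))

theorem isPOVM_permProdOp (hk : 0 < k) (hB : ∀ y, IsPOVM (B y)) : IsPOVM (permProdOp B) := by
  refine ⟨fun σb => (fullySep_permProdOp hk (fun y => (hB y).1) σb).posSemidef, ?_⟩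
  have hk! : (k ! : ℂ) ≠ 0 := by exact_mod_cast k.factorial_ne_zero
  simp only [permProdOp, Fintype.sum_prod_type, ← Finset.smul_sum, ← map_sum,
    sum_prodOp_eq_one fun y => (hB y).2, map_one, Finset.sum_const, Finset.card_univ,
    Fintype.card_perm, Fintype.card_fin, ← Nat.cast_smul_eq_nsmul ℂ, smul_smul,
    inv_mul_cancel₀ hk!, one_smul]

theorem symmetrize_eq_sum_smul_permProdOp (hk : 0 < k) {A : Matrix (Fin d) (Fin d) ℂ}
    {r : (Fin k → Fin nb) → ℝ}
    (h : ∀ ρ, IsDensity ρ →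
      (ρ * A).trace = ∑ b, r b • (tpow k ρ * prodOp fun y => B y (b y)).trace) :
    symmetrize k A = ∑ σb, r σb.2 • permProdOp B σb := by
  have hk! : (k ! : ℂ) ≠ 0 := by exact_mod_cast k.factorial_ne_zero
  have hT := factorial_smul_symmetrize_eq_sum_permTensor hk (A := A)
    (T := ∑ b, r b • prodOp fun y => B y (b y)) fun ρ hρ => by
      simp [h ρ hρ, Matrix.mul_sum, Matrix.trace_sum]
  rw [← inv_smul_smul₀ hk! (symmetrize k A), hT]
  simp only [permProdOp, Fintype.sum_prod_type, map_sum, ← Complex.coe_smul, map_smul,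
    Finset.smul_sum]
  exact Finset.sum_congr rfl fun σ _ => Finset.sum_congr rfl fun b _ => smul_comm _ _ _

end PermProdOp

end TensorPower

theorem exists_fin_jointObservable {n : Type*} [Fintype n] [DecidableEq n] {na nx : ℕ}
    {ι : Type*} [Fintype ι] (P : Matrix n n ℂ → Prop) (N : Fin nx → Fin na → Matrix n n ℂ)
    (G : ι → Matrix n n ℂ) (p : Fin nx → ι → Fin na → ℝ) (hG : IsPOVM G) (hP : ∀ l, P (G l))
    (hp : ∀ x l a, 0 ≤ p x l a) (hp1 : ∀ x l, ∑ a, p x l a = 1)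
    (hN : ∀ x a, N x a = ∑ l, p x l a • G l) :
    ∃ (nl : ℕ) (G' : Fin nl → Matrix n n ℂ) (p' : Fin nx → Fin nl → Fin na → ℝ),
      IsPOVM G' ∧ (∀ l, P (G' l)) ∧ (∀ x l a, 0 ≤ p' x l a) ∧ (∀ x l, ∑ a, p' x l a = 1) ∧
      ∀ x a, N x a = ∑ l, p' x l a • G' l := by
  let e := (Fintype.equivFin ι).symm
  refine ⟨Fintype.card ι, G ∘ e, fun x l => p x (e l), ⟨fun l => hG.1 _, ?_⟩, fun l => hP _,
    fun x l => hp x _, fun x l => hp1 x _, fun x a => ?_⟩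
  · rw [← hG.2]
    exact e.sum_comp G
  · rw [hN]
    exact (e.sum_comp fun l => p x l a • G l).symm

theorem symmetrized_jointly_measurable_of_kCompatibleProd_general
    {d na nx : ℕ} (k : ℕ) (hk : 0 < k)
    (M : Fin nx → Fin na → Matrix (Fin d) (Fin d) ℂ)
    (hcomp : KCompatibleProd k M) :
    ∃ (nl : ℕ) (G : Fin nl → Matrix (Fin k → Fin d) (Fin k → Fin d) ℂ)
      (p : Fin nx → Fin nl → Fin na → ℝ),
      IsPOVM G ∧
      (∀ l, FullySep (G l)) ∧
      (∀ x l a, 0 ≤ p x l a) ∧ (∀ x l, ∑ a, p x l a = 1) ∧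
      ∀ x a, symmetrize k (M x a) = ∑ l, p x l a • G l := by
  obtain ⟨nb, B, r, hB, hr_nonneg, hr_sum, htr⟩ := hcomp
  exact exists_fin_jointObservable FullySep _ (permProdOp B) (fun x σb a => r x σb.2 a)
    (isPOVM_permProdOp hk hB) (fullySep_permProdOp hk fun y => (hB y).1)
    (fun x _ a => hr_nonneg x _ a) (fun x _ => hr_sum x _)
    fun x a => symmetrize_eq_sum_smul_permProdOp hk fun ρ hρ => htr ρ hρ x a

/-- if `M` is `k`-compatible with a product-form `k`-copy joint observable,
then the symmetrized assemblage `M̃^k` is jointly measurable with a joint observable all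
of whose effects are fully separable. -/
theorem symmetrized_jointly_measurable_of_kCompatibleProd
    {d na nx : ℕ} (k : ℕ) (hk : 0 < k)
    (M : Fin nx → Fin na → Matrix (Fin d) (Fin d) ℂ)
    (hM : ∀ x, IsPOVM (M x))
    (hcomp : KCompatibleProd k M) :
    ∃ (nl : ℕ) (G : Fin nl → Matrix (Fin k → Fin d) (Fin k → Fin d) ℂ)
      (p : Fin nx → Fin nl → Fin na → ℝ),
      IsPOVM G ∧
      (∀ l, FullySep (G l)) ∧
      (∀ x l a, 0 ≤ p x l a) ∧ (∀ x l, ∑ a, p x l a = 1) ∧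
      ∀ x a, symmetrize k (M x a) = ∑ l, p x l a • G l :=
  symmetrized_jointly_measurable_of_kCompatibleProd_general k hk M hcomp
end
end

section
/- Let {M_{a|x}}_{a,x} be a measurement assemblage on ℂ^{d} that is 2-compatible with a 2-copy joint observable {G_λ}_λ on ℂ^{d_A} ⊗ ℂ^{d_B} (d_A = d_B = d). If every effect G_λ lies in the linear span of the set { B_1 ⊗ 𝟙 + 𝟙 ⊗ B_2 : B_1, B_2 Hermitian matrices on ℂ^{d_A}, ℂ^{d_B} respectively }, then {M_{a|x}}_{a,x} is 2-simulable. -/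
/-!
On a product state `ρ ⊗ ρ` with `tr ρ = 1`, the two-copy effect `B₁ ⊗ 𝟙 + 𝟙 ⊗ B₂` has the same
expectation as the one-copy effect `B₁ + B₂` has on `ρ`. This property is linear in the effect,
so every `G λ` in the span has a one-copy counterpart `N λ` with `tr[(ρ ⊗ ρ) G λ] = tr[ρ N λ]`.
Density matrices separate matrices and detect positivity, hence `{N λ}` is a POVM and
`M a x = ∑ λ, p(a|x,λ) N λ`: the assemblage is a post-processing of a single POVM.
-/

open Matrix BigOperators
open scoped Kronecker ComplexOrder

noncomputable section

/-- `k`-simulability: the assemblage arises from `k` POVMs by classical pre- and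
post-processing. -/
def KSimulable {d na nx : ℕ} (k : ℕ)
    (M : Fin nx → Fin na → Matrix (Fin d) (Fin d) ℂ) : Prop :=
  ∃ (nb : ℕ) (B : Fin k → Fin nb → Matrix (Fin d) (Fin d) ℂ)
    (p : Fin nx → Fin k → ℝ) (q : Fin nx → Fin k → Fin nb → Fin na → ℝ),
    (∀ y, IsPOVM (B y)) ∧
    (∀ x y, 0 ≤ p x y) ∧ (∀ x, ∑ y, p x y = 1) ∧
    (∀ x y b a, 0 ≤ q x y b a) ∧ (∀ x y b, ∑ a, q x y b a = 1) ∧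
    ∀ x a, M x a = ∑ y, p x y • ∑ b, q x y b a • B y b

namespace Matrix

variable {n : Type*} [Fintype n]

theorem trace_vecMulVec_star_mul {R : Type*} [CommSemiring R] [Star R] (v : n → R)
    (A : Matrix n n R) : (vecMulVec v (star v) * A).trace = star v ⬝ᵥ A *ᵥ v := by
  rw [vecMulVec_mul, trace_vecMulVec, dotProduct_comm, dotProduct_mulVec]

variable [DecidableEq n]

open scoped MatrixOrder in
theorem PosSemidef.trace_mul_nonneg {𝕜 : Type*} [RCLike 𝕜] {A B : Matrix n n 𝕜}
    (hA : A.PosSemidef) (hB : B.PosSemidef) : 0 ≤ (A * B).trace := by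
  obtain ⟨b, rfl⟩ := CStarAlgebra.nonneg_iff_eq_star_mul_self.mp hB.nonneg
  rw [star_eq_conjTranspose, ← mul_assoc, trace_mul_comm, ← mul_assoc]
  exact (hA.mul_mul_conjTranspose_same b).trace_nonneg

theorem eq_of_forall_dotProduct_mulVec_eq {A B : Matrix n n ℂ}
    (h : ∀ v, star v ⬝ᵥ A *ᵥ v = star v ⬝ᵥ B *ᵥ v) : A = B := by
  refine (toLpLin 2 2).injective ((ext_inner_map _ _).mp fun x => ?_)
  have inner_eq (C : Matrix n n ℂ) :
      inner ℂ (toLpLin 2 2 C x) x = star (star x.ofLp ⬝ᵥ C *ᵥ x.ofLp) := by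
    rw [toLpLin_apply, EuclideanSpace.inner_eq_star_dotProduct, dotProduct_star, dotProduct_comm]
  rw [inner_eq, inner_eq, h]

end Matrix

section States

variable {n : Type*} [Fintype n]

def pureState (v : n → ℂ) : Matrix n n ℂ :=
  (star v ⬝ᵥ v)⁻¹ • vecMulVec v (star v)

theorem dotProduct_mulVec_eq_mul_trace_pureState_mul (v : n → ℂ) (A : Matrix n n ℂ) :
    star v ⬝ᵥ A *ᵥ v = (star v ⬝ᵥ v) * (pureState v * A).trace := by
  rcases eq_or_ne v 0 with rfl | hv
  · simp
  rw [pureState, smul_mul, trace_smul, trace_vecMulVec_star_mul, smul_eq_mul,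
    mul_inv_cancel_left₀ (dotProduct_star_self_eq_zero.not.mpr hv)]

variable [DecidableEq n]

theorem isDensity_pureState {v : n → ℂ} (hv : v ≠ 0) : IsDensity (pureState v) := by
  have hpos : 0 < star v ⬝ᵥ v := dotProduct_star_self_pos_iff.mpr hv
  refine ⟨(posSemidef_vecMulVec_self_star v).smul (inv_nonneg.mpr hpos.le), ?_⟩
  rw [pureState, trace_smul, ← Matrix.mul_one (vecMulVec v (star v)), trace_vecMulVec_star_mul,
    one_mulVec, smul_eq_mul, inv_mul_cancel₀ hpos.ne']

theorem eq_of_forall_isDensity_trace_mul_eq {A B : Matrix n n ℂ}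
    (h : ∀ ρ, IsDensity ρ → (ρ * A).trace = (ρ * B).trace) : A = B := by
  refine eq_of_forall_dotProduct_mulVec_eq fun v => ?_
  rcases eq_or_ne v 0 with rfl | hv
  · simp
  rw [dotProduct_mulVec_eq_mul_trace_pureState_mul, dotProduct_mulVec_eq_mul_trace_pureState_mul,
    h _ (isDensity_pureState hv)]

theorem posSemidef_of_forall_isDensity_trace_mul_nonneg {A : Matrix n n ℂ}
    (h : ∀ ρ, IsDensity ρ → 0 ≤ (ρ * A).trace) : A.PosSemidef := by
  have hA : A.IsHermitian := eq_of_forall_isDensity_trace_mul_eq fun ρ hρ => by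
    rw [← hρ.1.isHermitian.eq, ← conjTranspose_mul, trace_conjTranspose, trace_mul_comm,
      hρ.1.isHermitian.eq]
    exact (h ρ hρ).isSelfAdjoint.star_eq
  refine .of_dotProduct_mulVec_nonneg hA fun v => ?_
  rcases eq_or_ne v 0 with rfl | hv
  · simp
  rw [dotProduct_mulVec_eq_mul_trace_pureState_mul]
  exact mul_nonneg (dotProduct_star_self_nonneg v) (h _ (isDensity_pureState hv))

end States

section ProductStates

variable (R n : Type*) [CommRing R] [Fintype n] [DecidableEq n]

def linearOnProductStates : Submodule R (Matrix (n × n) (n × n) R) where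
  carrier := {X | ∃ N : Matrix n n R,
    ∀ ρ : Matrix n n R, ρ.trace = 1 → ((ρ ⊗ₖ ρ) * X).trace = (ρ * N).trace}
  zero_mem' := ⟨0, by simp⟩
  add_mem' := by
    rintro X Y ⟨N, hN⟩ ⟨N', hN'⟩
    exact ⟨N + N', fun ρ hρ => by simp only [Matrix.mul_add, trace_add, hN ρ hρ, hN' ρ hρ]⟩
  smul_mem' := by
    rintro c X ⟨N, hN⟩
    exact ⟨c • N, fun ρ hρ => by simp only [Matrix.mul_smul, trace_smul, hN ρ hρ]⟩

variable {R n}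

theorem kronecker_one_add_one_kronecker_mem_linearOnProductStates (B₁ B₂ : Matrix n n R) :
    B₁ ⊗ₖ (1 : Matrix n n R) + (1 : Matrix n n R) ⊗ₖ B₂ ∈ linearOnProductStates R n :=
  ⟨B₁ + B₂, fun ρ hρ => by
    simp only [Matrix.mul_add, trace_add, ← mul_kronecker_mul, trace_kronecker,
      hρ, mul_one, one_mul]⟩

end ProductStates

theorem isPOVM_of_trace_kronecker_self_mul_eq {ι n : Type*} [Fintype ι] [Fintype n]
    [DecidableEq n] {G : ι → Matrix (n × n) (n × n) ℂ} (hG : IsPOVM G)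
    {N : ι → Matrix n n ℂ} (hN : ∀ i ρ, IsDensity ρ → ((ρ ⊗ₖ ρ) * G i).trace = (ρ * N i).trace) :
    IsPOVM N := by
  refine ⟨fun i => posSemidef_of_forall_isDensity_trace_mul_nonneg fun ρ hρ => ?_,
    eq_of_forall_isDensity_trace_mul_eq fun ρ hρ => ?_⟩
  · rw [← hN i ρ hρ]
    exact (hρ.1.kronecker hρ.1).trace_mul_nonneg (hG.1 i)
  · have hsum : (ρ * ∑ i, N i).trace = ((ρ ⊗ₖ ρ) * ∑ i, G i).trace := by
      simp only [Matrix.mul_sum, trace_sum, hN _ ρ hρ]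
    rw [hsum, hG.2, Matrix.mul_one, Matrix.mul_one, trace_kronecker, hρ.2, mul_one]

theorem kSimulable_of_postprocessing {d na nx nl k : ℕ} (hk : k ≠ 0)
    {M : Fin nx → Fin na → Matrix (Fin d) (Fin d) ℂ} {N : Fin nl → Matrix (Fin d) (Fin d) ℂ}
    (hN : IsPOVM N) {p : Fin nx → Fin nl → Fin na → ℝ}
    (hp0 : ∀ x l a, 0 ≤ p x l a) (hp1 : ∀ x l, ∑ a, p x l a = 1)
    (hMN : ∀ x a, M x a = ∑ l, p x l a • N l) : KSimulable k M := by
  refine ⟨nl, fun _ => N, fun _ _ => (k : ℝ)⁻¹, fun x _ => p x, fun _ => hN,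
    fun _ _ => by positivity, fun _ => ?_, fun x _ => hp0 x, fun x _ => hp1 x, fun x a => ?_⟩
  · simp [hk]
  · simp [← hMN, Finset.sum_const, ← Nat.cast_smul_eq_nsmul ℝ, smul_smul, hk]

theorem twoSimulable_of_span_joint_observable_general
    {d na nx nl : ℕ}
    (M : Fin nx → Fin na → Matrix (Fin d) (Fin d) ℂ)
    (G : Fin nl → Matrix (Fin d × Fin d) (Fin d × Fin d) ℂ)
    (hG : IsPOVM G)
    (p : Fin nx → Fin nl → Fin na → ℝ)
    (hp0 : ∀ x l a, 0 ≤ p x l a) (hp1 : ∀ x l, ∑ a, p x l a = 1)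
    (hcomp : ∀ ρ : Matrix (Fin d) (Fin d) ℂ, IsDensity ρ → ∀ x a,
      (ρ * M x a).trace = ∑ l, p x l a • ((ρ ⊗ₖ ρ) * G l).trace)
    (hspan : ∀ l, G l ∈ Submodule.span ℂ
      {X : Matrix (Fin d × Fin d) (Fin d × Fin d) ℂ |
        ∃ B₁ B₂ : Matrix (Fin d) (Fin d) ℂ, B₁.IsHermitian ∧ B₂.IsHermitian ∧
          X = B₁ ⊗ₖ (1 : Matrix (Fin d) (Fin d) ℂ)
              + (1 : Matrix (Fin d) (Fin d) ℂ) ⊗ₖ B₂}) :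
    KSimulable 2 M := by
  have hG_linear (l : Fin nl) : G l ∈ linearOnProductStates ℂ (Fin d) := by
    refine Submodule.span_le.mpr ?_ (hspan l)
    rintro _ ⟨B₁, B₂, -, -, rfl⟩
    exact kronecker_one_add_one_kronecker_mem_linearOnProductStates B₁ B₂
  choose N hN using hG_linear
  have hN_povm : IsPOVM N := isPOVM_of_trace_kronecker_self_mul_eq hG fun l ρ hρ => hN l ρ hρ.2
  refine kSimulable_of_postprocessing two_ne_zero hN_povm hp0 hp1 fun x a =>
    eq_of_forall_isDensity_trace_mul_eq fun ρ hρ => ?_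
  simp only [hcomp ρ hρ, hN _ ρ hρ.2, Matrix.mul_sum, trace_sum, Matrix.mul_smul, trace_smul]

/-- if `M` is `2`-compatible with a `2`-copy joint observable `G` whose
effects all lie in the linear span of
`{B₁ ⊗ 𝟙 + 𝟙 ⊗ B₂ : B₁, B₂ Hermitian}`, then `M` is `2`-simulable. -/
theorem twoSimulable_of_span_joint_observable
    {d na nx nl : ℕ}
    (M : Fin nx → Fin na → Matrix (Fin d) (Fin d) ℂ)
    (hM : ∀ x, IsPOVM (M x))
    (G : Fin nl → Matrix (Fin d × Fin d) (Fin d × Fin d) ℂ)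
    (hG : IsPOVM G)
    (p : Fin nx → Fin nl → Fin na → ℝ)
    (hp0 : ∀ x l a, 0 ≤ p x l a) (hp1 : ∀ x l, ∑ a, p x l a = 1)
    (hcomp : ∀ ρ : Matrix (Fin d) (Fin d) ℂ, IsDensity ρ → ∀ x a,
      (ρ * M x a).trace = ∑ l, p x l a • ((ρ ⊗ₖ ρ) * G l).trace)
    (hspan : ∀ l, G l ∈ Submodule.span ℂ
      {X : Matrix (Fin d × Fin d) (Fin d × Fin d) ℂ |
        ∃ B₁ B₂ : Matrix (Fin d) (Fin d) ℂ, B₁.IsHermitian ∧ B₂.IsHermitian ∧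
          X = B₁ ⊗ₖ (1 : Matrix (Fin d) (Fin d) ℂ)
              + (1 : Matrix (Fin d) (Fin d) ℂ) ⊗ₖ B₂}) :
    KSimulable 2 M :=
  twoSimulable_of_span_joint_observable_general M G hG p hp0 hp1 hcomp hspan
end
end

section
/- Let Ã be a Hermitian d_A×d_A matrix and B̃ a Hermitian d_B×d_B matrix such that G = Ã ⊗ 𝟙 + 𝟙 ⊗ B̃ is positive semidefinite. Then there exist positive semidefinite matrices A (of size d_A) and B (of size d_B) such that G = A ⊗ 𝟙 + 𝟙 ⊗ B. -/
open Matrix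
open scoped Kronecker ComplexOrder

/-!
Let `λ` be the smallest eigenvalue of `B̃` and `v` a unit eigenvector for it, and shift the
scalar `λ` from one tensor factor to the other: `A = Ã + λ 𝟙`, `B = B̃ - λ 𝟙`. Then `B ≥ 0`
because its spectrum is that of `B̃` shifted by `-λ`, and `A ≥ 0` because for every `x` the
quadratic form of `G` at `x ⊗ v` is `x* Ã x + λ x* x = x* A x`.
-/

namespace Matrix

variable {l m n p R 𝕜 : Type*}

section Kronecker

variable [CommSemiring R] [Fintype m] [Fintype n]

theorem kronecker_mulVec_kronecker (M : Matrix l m R) (N : Matrix p n R) (x : m → R)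
    (y : n → R) :
    (M ⊗ₖ N) *ᵥ (fun j : m × n => x j.1 * y j.2) = fun i => (M *ᵥ x) i.1 * (N *ᵥ y) i.2 := by
  ext ⟨i, k⟩
  simp only [mulVec, dotProduct, kroneckerMap_apply, Fintype.sum_prod_type, Finset.sum_mul_sum]
  exact Finset.sum_congr rfl fun _ _ => Finset.sum_congr rfl fun _ _ => by ring

theorem dotProduct_kronecker_kronecker (x x' : m → R) (y y' : n → R) :
    (fun i : m × n => x i.1 * y i.2) ⬝ᵥ (fun i => x' i.1 * y' i.2) = (x ⬝ᵥ x') * (y ⬝ᵥ y') := by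
  simp only [dotProduct, Fintype.sum_prod_type, Finset.sum_mul_sum]
  exact Finset.sum_congr rfl fun _ _ => Finset.sum_congr rfl fun _ _ => by ring

end Kronecker

theorem add_smul_one_kronecker_one_add_one_kronecker_sub_smul_one [CommRing R] [DecidableEq m]
    [DecidableEq n] (A : Matrix m m R) (B : Matrix n n R) (c : R) :
    (A + c • 1) ⊗ₖ 1 + 1 ⊗ₖ (B - c • 1) = A ⊗ₖ (1 : Matrix n n R) + (1 : Matrix m m R) ⊗ₖ B := by
  rw [add_kronecker, sub_eq_add_neg, kronecker_add, ← neg_smul, smul_kronecker, kronecker_smul,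
    one_kronecker_one, neg_smul]
  abel

variable [RCLike 𝕜] [DecidableEq n]

theorem isHermitian_ofReal_smul_one (c : ℝ) : ((c : 𝕜) • (1 : Matrix n n 𝕜)).IsHermitian :=
  isHermitian_one.smul (by simp [IsSelfAdjoint])

variable [Fintype n]

theorem IsHermitian.star_eigenvectorBasis_dotProduct_self {B : Matrix n n 𝕜} (hB : B.IsHermitian)
    (j : n) : star ⇑(hB.eigenvectorBasis j) ⬝ᵥ ⇑(hB.eigenvectorBasis j) = 1 := by
  rw [dotProduct_comm, ← EuclideanSpace.inner_eq_star_dotProduct]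
  exact hB.eigenvectorBasis.inner_eq_one j

theorem IsHermitian.star_eigenvectorBasis_dotProduct_mulVec {B : Matrix n n 𝕜}
    (hB : B.IsHermitian) (j : n) :
    star ⇑(hB.eigenvectorBasis j) ⬝ᵥ (B *ᵥ ⇑(hB.eigenvectorBasis j)) = hB.eigenvalues j := by
  rw [hB.mulVec_eigenvectorBasis, dotProduct_smul, hB.star_eigenvectorBasis_dotProduct_self,
    RCLike.real_smul_eq_coe_mul, mul_one]

theorem IsHermitian.posSemidef_sub_smul_one {B : Matrix n n 𝕜} (hB : B.IsHermitian) {c : ℝ}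
    (hc : ∀ j, c ≤ hB.eigenvalues j) : (B - (c : 𝕜) • 1).PosSemidef := by
  refine posSemidef_iff_isHermitian_and_spectrum_nonneg.mpr
    ⟨hB.sub (isHermitian_ofReal_smul_one c), ?_⟩
  rw [← Algebra.algebraMap_eq_smul_one, ← spectrum.sub_singleton_eq, hB.spectrum_eq_image_range]
  rintro _ ⟨_, ⟨_, ⟨j, rfl⟩, rfl⟩, _, rfl, rfl⟩
  show (0 : 𝕜) ≤ hB.eigenvalues j - c
  rw [← RCLike.ofReal_sub, RCLike.ofReal_nonneg, sub_nonneg]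
  exact hc j

theorem posSemidef_add_smul_one_of_posSemidef_kronecker_one_add [Fintype m] [DecidableEq m]
    {A : Matrix m m 𝕜} {B : Matrix n n 𝕜} (hA : A.IsHermitian)
    (hAB : (A ⊗ₖ 1 + 1 ⊗ₖ B).PosSemidef) {v : n → 𝕜} {c : ℝ} (hv : star v ⬝ᵥ v = 1)
    (hvB : star v ⬝ᵥ (B *ᵥ v) = c) : (A + (c : 𝕜) • 1).PosSemidef := by
  refine posSemidef_iff_dotProduct_mulVec.mpr
    ⟨hA.add (isHermitian_ofReal_smul_one c), fun x => ?_⟩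
  have hstar : star (fun i : m × n => x i.1 * v i.2) = fun i => star x i.1 * star v i.2 := by
    ext; exact star_mul' _ _
  have hxv := hAB.dotProduct_mulVec_nonneg fun i : m × n => x i.1 * v i.2
  rw [hstar, add_mulVec, dotProduct_add, kronecker_mulVec_kronecker, kronecker_mulVec_kronecker,
    dotProduct_kronecker_kronecker, dotProduct_kronecker_kronecker, one_mulVec, one_mulVec, hv,
    hvB, mul_one] at hxv
  rwa [add_mulVec, dotProduct_add, smul_mulVec, one_mulVec, dotProduct_smul, smul_eq_mul,
    mul_comm (c : 𝕜)]

end Matrix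

/-- if `Atil ⊗ 𝟙 + 𝟙 ⊗ Btil` is positive semidefinite for Hermitian `Atil`, `Btil`,
then it can be rewritten as `A ⊗ 𝟙 + 𝟙 ⊗ B` with `A`, `B` positive semidefinite. -/
theorem psd_decomposition_of_kronecker_sum {dA dB : ℕ}
    (Atil : Matrix (Fin dA) (Fin dA) ℂ) (Btil : Matrix (Fin dB) (Fin dB) ℂ)
    (hA : Atil.IsHermitian) (hB : Btil.IsHermitian)
    (hpsd : (Atil ⊗ₖ (1 : Matrix (Fin dB) (Fin dB) ℂ)
        + (1 : Matrix (Fin dA) (Fin dA) ℂ) ⊗ₖ Btil).PosSemidef) :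
    ∃ (A : Matrix (Fin dA) (Fin dA) ℂ) (B : Matrix (Fin dB) (Fin dB) ℂ),
      A.PosSemidef ∧ B.PosSemidef ∧
      Atil ⊗ₖ (1 : Matrix (Fin dB) (Fin dB) ℂ) + (1 : Matrix (Fin dA) (Fin dA) ℂ) ⊗ₖ Btil
        = A ⊗ₖ (1 : Matrix (Fin dB) (Fin dB) ℂ) + (1 : Matrix (Fin dA) (Fin dA) ℂ) ⊗ₖ B := by
  cases isEmpty_or_nonempty (Fin dB)
  · exact ⟨0, 0, .zero, .zero, Subsingleton.elim _ _⟩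
  obtain ⟨j, hj⟩ := Finite.exists_min hB.eigenvalues
  exact ⟨Atil + (hB.eigenvalues j : ℂ) • 1, Btil - (hB.eigenvalues j : ℂ) • 1,
    posSemidef_add_smul_one_of_posSemidef_kronecker_one_add hA hpsd
      (hB.star_eigenvectorBasis_dotProduct_self j) (hB.star_eigenvectorBasis_dotProduct_mulVec j),
    hB.posSemidef_sub_smul_one hj,
    (add_smul_one_kronecker_one_add_one_kronecker_sub_smul_one Atil Btil _).symm⟩
end

section
/- Let {A_λ}_λ be positive semidefinite d_A×d_A matrices and {B_λ}_λ positive semidefinite d_B×d_B matrices such that Σ_λ (A_λ ⊗ 𝟙 + 𝟙 ⊗ B_λ) = 𝟙 ⊗ 𝟙. Then Σ_λ A_λ = q 𝟙 and Σ_λ B_λ = (1-q) 𝟙 where q = 1 - (Σ_λ tr[B_λ])/d_B ∈ [0,1], and consequently there exist POVMs {C_λ}_λ on ℂ^{d_A} and {D_λ}_λ on ℂ^{d_B} such that A_λ ⊗ 𝟙 + 𝟙 ⊗ B_λ = q C_λ ⊗ 𝟙 + (1-q) 𝟙 ⊗ D_λ for all λ. -/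
open Matrix BigOperators
open scoped Kronecker ComplexOrder

noncomputable section

/-!
Summing the hypothesis over `λ` gives `(∑ A) ⊗ 𝟙 + 𝟙 ⊗ (∑ B) = 𝟙 ⊗ 𝟙`, and comparing entries
forces `∑ A = (1 - c) 𝟙` and `∑ B = c 𝟙` for one scalar `c`. Positivity of both sums makes `c`
a real number in `[0, 1]`, and taking traces identifies it with `(∑ tr B) / d_B`. Rescaling `A`
by `(1 - c)⁻¹` and `B` by `c⁻¹` gives the POVMs; when a weight vanishes, the corresponding
positive family vanishes as well and any POVM, e.g. the uniform one, will do.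
-/

open scoped MatrixOrder

namespace Matrix

variable {ι l m n p α : Type*}

theorem sum_kronecker [NonUnitalNonAssocSemiring α] (s : Finset ι) (A : ι → Matrix l m α)
    (B : Matrix n p α) : (∑ i ∈ s, A i) ⊗ₖ B = ∑ i ∈ s, A i ⊗ₖ B := by
  ext
  simp [sum_apply, Finset.sum_mul]

theorem kronecker_sum [NonUnitalNonAssocSemiring α] (s : Finset ι) (A : Matrix l m α)
    (B : ι → Matrix n p α) : A ⊗ₖ (∑ i ∈ s, B i) = ∑ i ∈ s, A ⊗ₖ B i := by
  ext
  simp [sum_apply, Finset.mul_sum]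

theorem exists_eq_smul_one_of_kronecker_one_add_one_kronecker_eq_one [CommRing α]
    [DecidableEq m] [DecidableEq n] [Nonempty m] [Nonempty n]
    {X : Matrix m m α} {Y : Matrix n n α}
    (h : X ⊗ₖ (1 : Matrix n n α) + (1 : Matrix m m α) ⊗ₖ Y = 1 ⊗ₖ 1) :
    ∃ c : α, X = (1 - c) • 1 ∧ Y = c • 1 := by
  have entry (i i' : m) (j j' : n) :
      X i i' * (1 : Matrix n n α) j j' + (1 : Matrix m m α) i i' * Y j j'
        = (1 : Matrix m m α) i i' * (1 : Matrix n n α) j j' := by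
    simpa using congrFun (congrFun h (i, j)) (i', j')
  obtain ⟨i₀⟩ := ‹Nonempty m›
  obtain ⟨j₀⟩ := ‹Nonempty n›
  have hX : X = (1 - Y j₀ j₀) • 1 := by
    ext i i'
    have := entry i i' j₀ j₀
    rcases eq_or_ne i i' with rfl | hi
    · simp only [one_apply_eq, mul_one, one_mul, smul_apply, smul_eq_mul] at this ⊢
      linear_combination this
    · simpa [hi] using this
  refine ⟨Y j₀ j₀, hX, ?_⟩
  ext j j'
  have := entry i₀ i₀ j j'
  simp only [hX, one_apply_eq, one_mul, smul_apply, smul_eq_mul, mul_one] at this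
  simp only [smul_apply, smul_eq_mul]
  linear_combination this

end Matrix

section POVM

variable {ι n : Type*} [Fintype ι] [Fintype n] [DecidableEq n]

theorem isPOVM_const [Nonempty ι] :
    IsPOVM (fun _ : ι ↦ (Fintype.card ι : ℝ)⁻¹ • (1 : Matrix n n ℂ)) := by
  refine ⟨fun _ ↦ PosSemidef.one.smul (by positivity), ?_⟩
  rw [Finset.sum_const, Finset.card_univ, ← Nat.cast_smul_eq_nsmul ℝ, smul_smul,
    mul_inv_cancel₀ (by positivity), one_smul]

theorem exists_isPOVM_smul_eq [Nonempty ι] {A : ι → Matrix n n ℂ} (hA : ∀ i, (A i).PosSemidef)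
    {q : ℝ} (hq : 0 ≤ q) (hsum : ∑ i, A i = q • 1) :
    ∃ C : ι → Matrix n n ℂ, IsPOVM C ∧ ∀ i, A i = q • C i := by
  rcases hq.eq_or_lt with rfl | hq
  · refine ⟨_, isPOVM_const, fun i ↦ ?_⟩
    rw [zero_smul] at hsum ⊢
    exact (Finset.sum_eq_zero_iff_of_nonneg fun i _ ↦ (hA i).nonneg).1 hsum i (Finset.mem_univ i)
  · refine ⟨fun i ↦ q⁻¹ • A i, ⟨fun i ↦ (hA i).smul (inv_nonneg.2 hq.le), ?_⟩, fun i ↦ ?_⟩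
    · rw [← Finset.smul_sum, hsum, smul_smul, inv_mul_cancel₀ hq.ne', one_smul]
    · rw [smul_smul, mul_inv_cancel₀ hq.ne', one_smul]

end POVM

/-- if PSD families `A_λ`, `B_λ` satisfy
`∑_λ (A_λ ⊗ 𝟙 + 𝟙 ⊗ B_λ) = 𝟙 ⊗ 𝟙`, then `∑_λ A_λ = q 𝟙` and `∑_λ B_λ = (1-q) 𝟙` with
`q = 1 - (∑_λ tr B_λ)/d_B ∈ [0,1]`, and there are POVMs `C`, `D` with
`A_λ ⊗ 𝟙 + 𝟙 ⊗ B_λ = q C_λ ⊗ 𝟙 + (1-q) 𝟙 ⊗ D_λ`. -/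
theorem povm_mixture_of_kronecker_sum_normalization {dA dB n : ℕ}
    (hdA : 0 < dA) (hdB : 0 < dB)
    (A : Fin n → Matrix (Fin dA) (Fin dA) ℂ)
    (B : Fin n → Matrix (Fin dB) (Fin dB) ℂ)
    (hA : ∀ l, (A l).PosSemidef) (hB : ∀ l, (B l).PosSemidef)
    (hsum : ∑ l, (A l ⊗ₖ (1 : Matrix (Fin dB) (Fin dB) ℂ)
        + (1 : Matrix (Fin dA) (Fin dA) ℂ) ⊗ₖ B l)
      = (1 : Matrix (Fin dA) (Fin dA) ℂ) ⊗ₖ (1 : Matrix (Fin dB) (Fin dB) ℂ)) :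
    (0 ≤ 1 - (∑ l, (B l).trace.re) / dB) ∧
    (1 - (∑ l, (B l).trace.re) / dB ≤ 1) ∧
    (∑ l, A l = (1 - (∑ l, (B l).trace.re) / dB : ℝ) • (1 : Matrix (Fin dA) (Fin dA) ℂ)) ∧
    (∑ l, B l = (1 - (1 - (∑ l, (B l).trace.re) / dB) : ℝ) • (1 : Matrix (Fin dB) (Fin dB) ℂ)) ∧
    ∃ (C : Fin n → Matrix (Fin dA) (Fin dA) ℂ) (D : Fin n → Matrix (Fin dB) (Fin dB) ℂ),
      IsPOVM C ∧ IsPOVM D ∧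
      ∀ l, A l ⊗ₖ (1 : Matrix (Fin dB) (Fin dB) ℂ)
            + (1 : Matrix (Fin dA) (Fin dA) ℂ) ⊗ₖ B l
          = (1 - (∑ l', (B l').trace.re) / dB : ℝ) •
              (C l ⊗ₖ (1 : Matrix (Fin dB) (Fin dB) ℂ))
            + (1 - (1 - (∑ l', (B l').trace.re) / dB) : ℝ) •
              ((1 : Matrix (Fin dA) (Fin dA) ℂ) ⊗ₖ D l) := by
  have : Nonempty (Fin dA) := ⟨⟨0, hdA⟩⟩
  have : Nonempty (Fin dB) := ⟨⟨0, hdB⟩⟩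
  have : Nonempty (Fin n) := by
    rcases n with _ | n
    · simp at hsum
    · exact ⟨0⟩
  rw [Finset.sum_add_distrib, ← sum_kronecker, ← kronecker_sum] at hsum
  obtain ⟨c, hSA, hSB⟩ := exists_eq_smul_one_of_kronecker_one_add_one_kronecker_eq_one hsum
  have hc : 0 ≤ c := by
    simpa [hSB, smul_one_eq_diagonal] using posSemidef_sum Finset.univ fun l _ ↦ hB l
  obtain ⟨r, hr₀, rfl⟩ := RCLike.nonneg_iff_exists_ofReal.mp hc
  have hr₁ : r ≤ 1 := by
    have : (r : ℂ) ≤ 1 := by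
      simpa [hSA, smul_one_eq_diagonal] using posSemidef_sum Finset.univ fun l _ ↦ hA l
    exact_mod_cast this
  have hq : 1 - (∑ l, (B l).trace.re) / dB = 1 - r := by
    rw [← Complex.re_sum, ← trace_sum, hSB, trace_smul, trace_one]
    simp [hdB.ne']
  rw [hq, sub_sub_cancel]
  replace hSA : ∑ l, A l = (1 - r) • 1 := by rw [hSA, ← algebraMap_smul ℂ (1 - r)]; simp
  replace hSB : ∑ l, B l = r • 1 := by rw [hSB, ← algebraMap_smul ℂ r]
  obtain ⟨C, hC, hAC⟩ := exists_isPOVM_smul_eq hA (sub_nonneg.2 hr₁) hSA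
  obtain ⟨D, hD, hBD⟩ := exists_isPOVM_smul_eq hB hr₀ hSB
  refine ⟨by linarith, by linarith, hSA, hSB, C, D, hC, hD, fun l ↦ ?_⟩
  rw [hAC l, hBD l, smul_kronecker, kronecker_smul]
end
end
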